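/- Let n ≥ s ≥ r ≥ 3 be integers. For real x with (s−2)n²/(2(s−1)) < x < (s−1)n²/(2s), define p(x) = (1/s)(n + √(n² − 2sx/(s−1))), q(x) = (1/s)(n − (s−1)√(n² − 2sx/(s−1))), and f(x) = C(s−1, r) p(x)^r + C(s−1, r−1) p(x)^{r−1} q(x). Then f is differentiable at every such x with derivative f′(x) = C(s−2, r−2) · p(x)^{r−2}. -/

import Mathlib

/-!
With `T = √(n² - 2sx/(s-1))` we have `p = (n + T)/s`, `q = (n - (s-1)T)/s`, hence `q' = -(s-1) p'`,
`p - q = T` and `p' = -1/((s-1)T)`. Writing `f = a p^r + b p^(r-1) q`, the relation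
`r·C(s-1,r) = (s-r)·C(s-1,r-1)` collapses the product rule to `f' = b (r-1) p^(r-2) · p'(q - p)`,
and `p'(q - p) = 1/(s-1)` turns `b (r-1)/(s-1)` into `C(s-2,r-2)`.
-/

/-- `p(x) = (1/s)(n + √(n² - 2sx/(s-1)))`. -/
noncomputable def pfun (n s : ℕ) (x : ℝ) : ℝ :=
  (1 / (s : ℝ)) * ((n : ℝ) + Real.sqrt ((n : ℝ) ^ 2 - 2 * (s : ℝ) * x / ((s : ℝ) - 1)))

/-- `q(x) = (1/s)(n - (s-1)√(n² - 2sx/(s-1)))`. -/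
noncomputable def qfun (n s : ℕ) (x : ℝ) : ℝ :=
  (1 / (s : ℝ)) * ((n : ℝ) - ((s : ℝ) - 1) * Real.sqrt ((n : ℝ) ^ 2 - 2 * (s : ℝ) * x / ((s : ℝ) - 1)))

/-- `f(x) = C(s-1, r) p(x)^r + C(s-1, r-1) p(x)^{r-1} q(x)`. -/
noncomputable def ffun (n s r : ℕ) (x : ℝ) : ℝ :=
  ((s - 1).choose r : ℝ) * pfun n s x ^ r +
    ((s - 1).choose (r - 1) : ℝ) * pfun n s x ^ (r - 1) * qfun n s x

theorem Nat.cast_choose_succ_mul {R : Type*} [CommRing R] (m k : ℕ) :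
    (m.choose (k + 1) : R) * (k + 1) = m.choose k * (m - k) := by
  rcases le_or_gt k m with hkm | hmk
  · rw [← Nat.cast_sub hkm]
    exact_mod_cast congrArg (Nat.cast : ℕ → R) (Nat.choose_succ_right_eq m k)
  · simp [Nat.choose_eq_zero_of_lt hmk, Nat.choose_eq_zero_of_lt (Nat.lt_succ_of_lt hmk)]

theorem hasDerivAt_mul_pow_add_mul_pow_mul {𝕜 : Type*} [NontriviallyNormedField 𝕜]
    {p q : 𝕜 → 𝕜} {p' q' m a b x : 𝕜} (k : ℕ) (hp : HasDerivAt p p' x) (hq : HasDerivAt q q' x)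
    (hq' : q' = -m * p') (hab : a * (k + 2) = b * (m - (k + 1))) :
    HasDerivAt (fun y => a * p y ^ (k + 2) + b * p y ^ (k + 1) * q y)
      (b * (k + 1) * p x ^ k * (p' * (q x - p x))) x := by
  refine (((hp.fun_pow (k + 2)).const_mul a).add
    (((hp.fun_pow (k + 1)).const_mul b).mul hq)).congr_deriv ?_
  simp only [Nat.add_succ_sub_one, Nat.add_sub_cancel, Nat.cast_add, Nat.cast_ofNat, Nat.cast_one,
    hq']
  linear_combination p x ^ (k + 1) * p' * hab

section Radical

variable (n s : ℕ)

noncomputable def radical (x : ℝ) : ℝ :=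
  Real.sqrt ((n : ℝ) ^ 2 - 2 * (s : ℝ) * x / ((s : ℝ) - 1))

variable {n s}

theorem radicand_pos {x : ℝ} (hs : 1 < s) (hx : x < ((s : ℝ) - 1) * (n : ℝ) ^ 2 / (2 * (s : ℝ))) :
    0 < (n : ℝ) ^ 2 - 2 * (s : ℝ) * x / ((s : ℝ) - 1) := by
  have hs1 : (0 : ℝ) < (s : ℝ) - 1 := sub_pos.mpr (by exact_mod_cast hs)
  rw [lt_div_iff₀ (by positivity)] at hx
  rw [sub_pos, div_lt_iff₀ hs1]
  linarith

theorem hasDerivAt_radical {x : ℝ} (hu : 0 < (n : ℝ) ^ 2 - 2 * (s : ℝ) * x / ((s : ℝ) - 1)) :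
    HasDerivAt (radical n s) (-(2 * (s : ℝ) / ((s : ℝ) - 1)) / (2 * radical n s x)) x := by
  refine HasDerivAt.sqrt ?_ hu.ne'
  simpa using ((hasDerivAt_id x).const_mul (2 * (s : ℝ))).div_const ((s : ℝ) - 1)
    |>.const_sub ((n : ℝ) ^ 2)

theorem pfun_sub_qfun (hs : s ≠ 0) (x : ℝ) : pfun n s x - qfun n s x = radical n s x := by
  unfold pfun qfun radical
  field_simp
  ring

theorem hasDerivAt_pfun {x : ℝ} (hs : s ≠ 0)
    (hu : 0 < (n : ℝ) ^ 2 - 2 * (s : ℝ) * x / ((s : ℝ) - 1)) :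
    HasDerivAt (pfun n s) (-1 / (((s : ℝ) - 1) * radical n s x)) x := by
  refine (((hasDerivAt_radical hu).const_add (n : ℝ)).const_mul (1 / (s : ℝ))).congr_deriv ?_
  have : radical n s x ≠ 0 := (Real.sqrt_pos.mpr hu).ne'
  field_simp

theorem hasDerivAt_qfun {x : ℝ} (hs : 1 < s)
    (hu : 0 < (n : ℝ) ^ 2 - 2 * (s : ℝ) * x / ((s : ℝ) - 1)) :
    HasDerivAt (qfun n s) (-((s : ℝ) - 1) * (-1 / (((s : ℝ) - 1) * radical n s x))) x := by
  refine ((((hasDerivAt_radical hu).const_mul ((s : ℝ) - 1)).const_sub (n : ℝ)).const_mul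
    (1 / (s : ℝ))).congr_deriv ?_
  have : radical n s x ≠ 0 := (Real.sqrt_pos.mpr hu).ne'
  have hs1 : (s : ℝ) - 1 ≠ 0 := sub_ne_zero.mpr (by exact_mod_cast hs.ne')
  field_simp

end Radical

theorem f_deriv_general (n s r : ℕ) (hr : 3 ≤ r) (hrs : r ≤ s) (x : ℝ)
    (hx2 : x < ((s : ℝ) - 1) * (n : ℝ) ^ 2 / (2 * (s : ℝ))) :
    HasDerivAt (ffun n s r) (((s - 2).choose (r - 2) : ℝ) * pfun n s x ^ (r - 2)) x := by
  obtain ⟨k, rfl⟩ : ∃ k, r = k + 2 := ⟨r - 2, by omega⟩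
  obtain ⟨m, rfl⟩ : ∃ m, s = m + 2 := ⟨s - 2, by omega⟩
  have hu := radicand_pos (by omega) hx2
  have hT : radical n (m + 2) x ≠ 0 := (Real.sqrt_pos.mpr hu).ne'
  have hs : ((m + 2 : ℕ) : ℝ) - 1 = m + 1 := by push_cast; ring
  have hab : ((m + 1).choose (k + 2) : ℝ) * (k + 2)
      = (m + 1).choose (k + 1) * (((m + 2 : ℕ) : ℝ) - 1 - (k + 1)) := by
    rw [hs]
    have hchoose := Nat.cast_choose_succ_mul (R := ℝ) (m + 1) (k + 1)
    push_cast at hchoose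
    linear_combination hchoose
  refine (hasDerivAt_mul_pow_add_mul_pow_mul k (hasDerivAt_pfun (by omega) hu)
    (hasDerivAt_qfun (by omega) hu) rfl hab).congr_deriv ?_
  rw [← neg_sub (pfun n (m + 2) x), pfun_sub_qfun (by omega), hs, Nat.add_sub_cancel,
    Nat.add_sub_cancel]
  have hchoose := congrArg (Nat.cast : ℕ → ℝ) (Nat.add_one_mul_choose_eq m k)
  push_cast at hchoose
  have hpq : -1 / ((m + 1 : ℝ) * radical n (m + 2) x) * -radical n (m + 2) x = 1 / (m + 1) := by
    field_simp
  rw [hpq, eq_comm, ← hchoose]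
  field_simp

theorem f_deriv (n s r : ℕ) (hr : 3 ≤ r) (hrs : r ≤ s) (hsn : s ≤ n) (x : ℝ)
    (hx1 : ((s : ℝ) - 2) * (n : ℝ) ^ 2 / (2 * ((s : ℝ) - 1)) < x)
    (hx2 : x < ((s : ℝ) - 1) * (n : ℝ) ^ 2 / (2 * (s : ℝ))) :
    HasDerivAt (ffun n s r) (((s - 2).choose (r - 2) : ℝ) * pfun n s x ^ (r - 2)) x :=
  f_deriv_general n s r hr hrs x hx2
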